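/- arXiv:1702.08260 — 3 statements merged into one kernel-verified Lean document; each statement's English description precedes it below -/
import Mathlib

section
/- (Petersen's characterization) A topological dynamical system (X, f) on a compact metric space without isolated points is topologically weakly mixing if and only if for every pair of nonempty open sets U, V ⊆ X there exists n ∈ ℕ such that f^n(U) ∩ U ≠ ∅ and f^n(U) ∩ V ≠ ∅. -/
/-!
Write `N(U, V)` for the set of times `n` with `fⁿ U ∩ V ≠ ∅`. Since the iterates commute,
`N(f⁻ᵃ B, f⁻ᵃ D) ⊆ N(B, D)`. So if `a ∈ N(A, B)`, the set `A' = A ∩ f⁻ᵃ B` is open and nonempty,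
`N(A', C) ⊆ N(A, C)` and `N(A', f⁻ᵃ D) ⊆ N(B, D)`: a common time for two pairs of sets follows
from one for two pairs with the same source. Applying such reductions to Petersen's condition
`N(U, U) ∩ N(U, V) ≠ ∅` gives first `N(U, U) ∩ N(V, W) ≠ ∅`, then `N(U, V) ∩ N(U, W) ≠ ∅`, and
finally `N(A, C) ∩ N(B, D) ≠ ∅`.
-/

open Set Function

def hittingTimes {X : Type*} (f : X → X) (U V : Set X) : Set ℕ :=
  {n | (U ∩ f^[n] ⁻¹' V).Nonempty}

section HittingTimes

variable {X : Type*} {f : X → X}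

theorem hittingTimes_mono {A A' C C' : Set X} (hA : A ⊆ A') (hC : C ⊆ C') :
    hittingTimes f A C ⊆ hittingTimes f A' C' :=
  fun _ hn => hn.mono (inter_subset_inter hA (preimage_mono hC))

theorem hittingTimes_preimage_iterate_subset (k : ℕ) (B D : Set X) :
    hittingTimes f (f^[k] ⁻¹' B) (f^[k] ⁻¹' D) ⊆ hittingTimes f B D := by
  rintro n ⟨x, hxB, hxD⟩
  refine ⟨f^[k] x, hxB, ?_⟩
  rwa [mem_preimage, ← iterate_add_apply, add_comm, iterate_add_apply]

theorem hittingTimes_inter_preimage_iterate_subset (k : ℕ) (A B D : Set X) :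
    hittingTimes f (A ∩ f^[k] ⁻¹' B) (f^[k] ⁻¹' D) ⊆ hittingTimes f B D :=
  (hittingTimes_mono inter_subset_right subset_rfl).trans
    (hittingTimes_preimage_iterate_subset k B D)

end HittingTimes

section Petersen

variable {X : Type*} [TopologicalSpace X] {f : X → X}
  (hf : Continuous f) (hsurj : Surjective f)
  (hP : ∀ U V : Set X, IsOpen U → IsOpen V → U.Nonempty → V.Nonempty →
    (hittingTimes f U U ∩ hittingTimes f U V).Nonempty)
include hf hsurj hP

theorem exists_hittingTimes_self_inter_hittingTimes {U V W : Set X} (hU : IsOpen U)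
    (hV : IsOpen V) (hW : IsOpen W) (hUne : U.Nonempty) (hVne : V.Nonempty)
    (hWne : W.Nonempty) :
    (hittingTimes f U U ∩ hittingTimes f V W).Nonempty := by
  obtain ⟨a, -, haUV⟩ := hP U V hU hV hUne hVne
  obtain ⟨n, hnU, hnW⟩ := hP (U ∩ f^[a] ⁻¹' V) (f^[a] ⁻¹' W)
    (hU.inter (hV.preimage (hf.iterate a))) (hW.preimage (hf.iterate a)) haUV
    (hWne.preimage (hsurj.iterate a))
  exact ⟨n, hittingTimes_mono inter_subset_left inter_subset_left hnU,
    hittingTimes_inter_preimage_iterate_subset a U V W hnW⟩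

theorem exists_hittingTimes_inter_hittingTimes_of_same_source {U V W : Set X} (hU : IsOpen U)
    (hV : IsOpen V) (hW : IsOpen W) (hUne : U.Nonempty) (hVne : V.Nonempty)
    (hWne : W.Nonempty) :
    (hittingTimes f U V ∩ hittingTimes f U W).Nonempty := by
  obtain ⟨k, hkUU, hkVW⟩ :=
    exists_hittingTimes_self_inter_hittingTimes hf hsurj hP hU hV hW hUne hVne hWne
  obtain ⟨n, -, hn⟩ := hP (U ∩ f^[k] ⁻¹' U) (V ∩ f^[k] ⁻¹' W)
    (hU.inter (hU.preimage (hf.iterate k))) (hV.inter (hW.preimage (hf.iterate k))) hkUU hkVW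
  exact ⟨n, hittingTimes_mono inter_subset_left inter_subset_left hn,
    hittingTimes_preimage_iterate_subset k U W
      (hittingTimes_mono inter_subset_right inter_subset_right hn)⟩

theorem exists_hittingTimes_inter_hittingTimes {A B C D : Set X} (hA : IsOpen A) (hB : IsOpen B)
    (hC : IsOpen C) (hD : IsOpen D) (hAne : A.Nonempty) (hBne : B.Nonempty) (hCne : C.Nonempty)
    (hDne : D.Nonempty) :
    (hittingTimes f A C ∩ hittingTimes f B D).Nonempty := by
  obtain ⟨a, -, haAB⟩ := hP A B hA hB hAne hBne
  obtain ⟨n, hnC, hnD⟩ := exists_hittingTimes_inter_hittingTimes_of_same_source hf hsurj hP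
    (hA.inter (hB.preimage (hf.iterate a))) hC (hD.preimage (hf.iterate a)) haAB hCne
    (hDne.preimage (hsurj.iterate a))
  exact ⟨n, hittingTimes_mono inter_subset_left subset_rfl hnC,
    hittingTimes_inter_preimage_iterate_subset a A B D hnD⟩

end Petersen

theorem stmt2_general {X : Type*} [MetricSpace X] (f : X ≃ₜ X) :
    (∀ A B C D : Set X, IsOpen A → IsOpen B → IsOpen C → IsOpen D →
        A.Nonempty → B.Nonempty → C.Nonempty → D.Nonempty →
        ∃ n : ℕ, ((⇑f)^[n] '' A ∩ C).Nonempty ∧ ((⇑f)^[n] '' B ∩ D).Nonempty) ↔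
      (∀ U V : Set X, IsOpen U → IsOpen V → U.Nonempty → V.Nonempty →
        ∃ n : ℕ, ((⇑f)^[n] '' U ∩ U).Nonempty ∧ ((⇑f)^[n] '' U ∩ V).Nonempty) := by
  simp only [image_inter_nonempty_iff]
  refine ⟨fun h U V hU hV hUne hVne => h U U U V hU hU hU hV hUne hUne hUne hVne, fun hP => ?_⟩
  intro A B C D hA hB hC hD hAne hBne hCne hDne
  exact exists_hittingTimes_inter_hittingTimes f.continuous f.surjective hP
    hA hB hC hD hAne hBne hCne hDne

/-- Petersen's characterization: a topological dynamical system on a compact metric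
space without isolated points is topologically weakly mixing iff for every pair of
nonempty open sets `U, V` there is `n` with `f^n U ∩ U ≠ ∅` and `f^n U ∩ V ≠ ∅`. -/
theorem stmt2 {X : Type*} [MetricSpace X] [CompactSpace X]
    (hiso : ∀ x : X, ¬ IsOpen ({x} : Set X)) (f : X ≃ₜ X) :
    (∀ A B C D : Set X, IsOpen A → IsOpen B → IsOpen C → IsOpen D →
        A.Nonempty → B.Nonempty → C.Nonempty → D.Nonempty →
        ∃ n : ℕ, ((⇑f)^[n] '' A ∩ C).Nonempty ∧ ((⇑f)^[n] '' B ∩ D).Nonempty) ↔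
      (∀ U V : Set X, IsOpen U → IsOpen V → U.Nonempty → V.Nonempty →
        ∃ n : ℕ, ((⇑f)^[n] '' U ∩ U).Nonempty ∧ ((⇑f)^[n] '' U ∩ V).Nonempty) :=
  stmt2_general f
end

section
/- (Banks) If (X, f) is a totally transitive topological dynamical system and the set of periodic points of f is dense in X, then (X, f) is topologically weakly mixing. -/
/-!
Hit `C` from `A` at some time `k`, and pick a periodic point `p ∈ A` with `f^[k] p ∈ C`, of
period `m`. Along the times `k + m * j` the orbit of `p` stays at `f^[k] p ∈ C`, so it suffices
that some `k + m * j` carries `B` into `D`; this is transitivity of `f^[m]` applied to `B` and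
`(f^[k])⁻¹' D`.
-/

open Function

section

variable {X : Type*} [TopologicalSpace X] {f : X → X}

theorem exists_isPeriodicPt_mem_of_iterate_image_inter_nonempty (hf : Continuous f)
    (hper : Dense {x : X | ∃ m : ℕ, 1 ≤ m ∧ f^[m] x = x}) {A C : Set X} (hA : IsOpen A)
    (hC : IsOpen C) {k : ℕ} (hk : (f^[k] '' A ∩ C).Nonempty) :
    ∃ p m, 1 ≤ m ∧ IsPeriodicPt f m p ∧ p ∈ A ∧ f^[k] p ∈ C := by
  have hAC : (A ∩ f^[k] ⁻¹' C).Nonempty := by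
    obtain ⟨_, ⟨a, haA, rfl⟩, haC⟩ := hk
    exact ⟨a, haA, haC⟩
  obtain ⟨p, ⟨m, hm, hpm⟩, hpA, hpC⟩ :=
    hper.exists_mem_open (hA.inter (hC.preimage (hf.iterate k))) hAC
  exact ⟨p, m, hm, hpm, hpA, hpC⟩

theorem exists_iterate_add_mul_image_inter_nonempty (hf : Continuous f) (hsurj : Surjective f)
    {m : ℕ} (htt : ∀ U V : Set X, IsOpen U → IsOpen V → U.Nonempty → V.Nonempty →
      ∃ j : ℕ, (f^[m * j] '' U ∩ V).Nonempty)
    {B D : Set X} (hB : IsOpen B) (hD : IsOpen D) (hBne : B.Nonempty) (hDne : D.Nonempty)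
    (k : ℕ) : ∃ j : ℕ, (f^[k + m * j] '' B ∩ D).Nonempty := by
  obtain ⟨j, _, ⟨b, hbB, rfl⟩, hbD⟩ := htt B (f^[k] ⁻¹' D) hB (hD.preimage (hf.iterate k)) hBne
    (hDne.preimage (hsurj.iterate k))
  refine ⟨j, f^[k + m * j] b, ⟨b, hbB, rfl⟩, ?_⟩
  rwa [iterate_add_apply]

end

theorem stmt3_general {X : Type*} [MetricSpace X] (f : X ≃ₜ X)
    (htt : ∀ n : ℕ, 1 ≤ n → ∀ U V : Set X, IsOpen U → IsOpen V →
      U.Nonempty → V.Nonempty → ∃ m : ℕ, ((⇑f)^[n * m] '' U ∩ V).Nonempty)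
    (hper : Dense {x : X | ∃ m : ℕ, 1 ≤ m ∧ (⇑f)^[m] x = x}) :
    ∀ A B C D : Set X, IsOpen A → IsOpen B → IsOpen C → IsOpen D →
      A.Nonempty → B.Nonempty → C.Nonempty → D.Nonempty →
      ∃ n : ℕ, ((⇑f)^[n] '' A ∩ C).Nonempty ∧ ((⇑f)^[n] '' B ∩ D).Nonempty := by
  intro A B C D hA hB hC hD hAne hBne hCne hDne
  obtain ⟨k, hk⟩ := htt 1 le_rfl A C hA hC hAne hCne
  rw [one_mul] at hk
  obtain ⟨p, m, hm, hpm, hpA, hpC⟩ :=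
    exists_isPeriodicPt_mem_of_iterate_image_inter_nonempty f.continuous hper hA hC hk
  obtain ⟨j, hj⟩ := exists_iterate_add_mul_image_inter_nonempty f.continuous f.surjective
    (htt m hm) hB hD hBne hDne k
  refine ⟨k + m * j, ⟨f^[k + m * j] p, ⟨p, hpA, rfl⟩, ?_⟩, hj⟩
  rwa [iterate_add_apply, (hpm.mul_const j).eq]

/-- Banks' theorem: if `(X, f)` is totally transitive and periodic points are dense,
then `(X, f)` is topologically weakly mixing. -/
theorem stmt3 {X : Type*} [MetricSpace X] [CompactSpace X] (f : X ≃ₜ X)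
    (htt : ∀ n : ℕ, 1 ≤ n → ∀ U V : Set X, IsOpen U → IsOpen V →
      U.Nonempty → V.Nonempty → ∃ m : ℕ, ((⇑f)^[n * m] '' U ∩ V).Nonempty)
    (hper : Dense {x : X | ∃ m : ℕ, 1 ≤ m ∧ (⇑f)^[m] x = x}) :
    ∀ A B C D : Set X, IsOpen A → IsOpen B → IsOpen C → IsOpen D →
      A.Nonempty → B.Nonempty → C.Nonempty → D.Nonempty →
      ∃ n : ℕ, ((⇑f)^[n] '' A ∩ C).Nonempty ∧ ((⇑f)^[n] '' B ∩ D).Nonempty :=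
  stmt3_general f htt hper
end

section
/- If (X, f) is a topological dynamical system such that the periodic points are dense and for every nonempty open U, V and every m ≥ 1 there exists j ≥ 1 with f^{jm}(U) ∩ V ≠ ∅ (total transitivity in the open-set sense), then for any nonempty open sets A, B, C, D ⊆ X there exists n ∈ ℕ with f^n(A) ∩ C ≠ ∅ and f^n(B) ∩ D ≠ ∅. -/
/-!
Transitivity gives `ℓ` with `f^ℓ(A) ∩ C ≠ ∅`, and density of periodic points gives a periodic
point `x`, of period `m`, in the open set `A ∩ f^{-ℓ}(C)`. Every time `ℓ + jm` then still sends
`x ∈ A` into `C`, so it only remains to choose `j` with `f^{jm}(B) ∩ f^{-ℓ}(D) ≠ ∅`, which total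
transitivity along multiples of `m` provides.
-/

open Function

section

variable {α : Type*}

theorem Function.IsPeriodicPt.iterate_add_mul_image_inter_nonempty {g : α → α} {x : α}
    {m l : ℕ} {A C : Set α} (hx : IsPeriodicPt g m x) (hxAC : x ∈ A ∩ g^[l] ⁻¹' C) (j : ℕ) :
    (g^[l + j * m] '' A ∩ C).Nonempty :=
  ⟨g^[l] x, ⟨x, hxAC.1, by rw [iterate_add_apply, (hx.const_mul j).eq]⟩, hxAC.2⟩

theorem Function.iterate_add_image_inter_nonempty {g : α → α} {B D : Set α} {k l : ℕ}
    (h : (g^[k] '' B ∩ g^[l] ⁻¹' D).Nonempty) : (g^[l + k] '' B ∩ D).Nonempty := by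
  rwa [iterate_add, Set.image_comp, Set.image_inter_nonempty_iff]

end

theorem stmt8_general {X : Type*} [MetricSpace X] (f : X ≃ₜ X)
    (hper : Dense {x : X | ∃ m : ℕ, 1 ≤ m ∧ (⇑f)^[m] x = x})
    (htt : ∀ U V : Set X, IsOpen U → IsOpen V → U.Nonempty → V.Nonempty →
      ∀ m : ℕ, 1 ≤ m → ∃ j : ℕ, 1 ≤ j ∧ ((⇑f)^[j * m] '' U ∩ V).Nonempty) :
    ∀ A B C D : Set X, IsOpen A → IsOpen B → IsOpen C → IsOpen D →
      A.Nonempty → B.Nonempty → C.Nonempty → D.Nonempty →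
      ∃ n : ℕ, ((⇑f)^[n] '' A ∩ C).Nonempty ∧ ((⇑f)^[n] '' B ∩ D).Nonempty := by
  intro A B C D hA hB hC hD hAne hBne hCne hDne
  obtain ⟨l, -, hAC⟩ := htt A C hA hC hAne hCne 1 le_rfl
  rw [mul_one, Set.image_inter_nonempty_iff] at hAC
  have hcont : Continuous (⇑f)^[l] := f.continuous.iterate l
  obtain ⟨x, ⟨m, hm, hxm⟩, hx⟩ := hper.exists_mem_open (hA.inter (hC.preimage hcont)) hAC
  obtain ⟨j, -, hBD⟩ := htt B ((⇑f)^[l] ⁻¹' D) hB (hD.preimage hcont) hBne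
    (hDne.preimage (f.surjective.iterate l)) m hm
  exact ⟨l + j * m, IsPeriodicPt.iterate_add_mul_image_inter_nonempty hxm hx j,
    iterate_add_image_inter_nonempty hBD⟩

/-- Core step of Banks' theorem: if periodic points are dense and `f` is totally
transitive in the open-set sense, then the four-open-set characterization of
topological weak mixing holds. -/
theorem stmt8 {X : Type*} [MetricSpace X] [CompactSpace X] (f : X ≃ₜ X)
    (hper : Dense {x : X | ∃ m : ℕ, 1 ≤ m ∧ (⇑f)^[m] x = x})
    (htt : ∀ U V : Set X, IsOpen U → IsOpen V → U.Nonempty → V.Nonempty →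
      ∀ m : ℕ, 1 ≤ m → ∃ j : ℕ, 1 ≤ j ∧ ((⇑f)^[j * m] '' U ∩ V).Nonempty) :
    ∀ A B C D : Set X, IsOpen A → IsOpen B → IsOpen C → IsOpen D →
      A.Nonempty → B.Nonempty → C.Nonempty → D.Nonempty →
      ∃ n : ℕ, ((⇑f)^[n] '' A ∩ C).Nonempty ∧ ((⇑f)^[n] '' B ∩ D).Nonempty :=
  stmt8_general f hper htt
end
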